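/- arXiv:1812.11062 — 8 statements merged into one kernel-verified Lean document; each statement's English description precedes it below -/
import Mathlib

section
/- Let f : ℝ → ℝ be measurable, log-concave, and integrable on (−∞, z) for every z ∈ ℝ. Define F(z) = ∫_{(−∞,z)} f(s) ds (integral with respect to Lebesgue measure). Then F is log-concave, i.e. F((1−t)·x + t·y) ≥ F(x)^{1−t} · F(y)^t for all x, y ∈ ℝ and t ∈ [0,1]. -/
/-!
The hazard rate `f / F` of a log-concave `f` is nonincreasing: shifting the integral defining
`F v` by `v - u` and using `f s * f v ≤ f u * f (s + v - u)` for `s ≤ u ≤ v` gives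
`f v * F u ≤ f u * F v`. So, with `ρ = f z / F z`, the function `F` grows at relative rate at
least `ρ` to the left of `z` and at most `ρ` to the right of it; chaining `n` such steps and
letting `(1 + ρ d / n) ^ n → exp (ρ d)` yields the supporting bound `F w ≤ F z * exp (ρ (w - z))`
at every `z` with `F z > 0`, and such bounds make `F` log-concave.
-/

open MeasureTheory Real Set Filter Topology

structure IsLogConcave (f : ℝ → ℝ) : Prop where
  nonneg : ∀ x, 0 ≤ f x
  rpow_mul_rpow_le : ∀ x y t : ℝ, 0 ≤ t → t ≤ 1 →
    f x ^ (1 - t) * f y ^ t ≤ f ((1 - t) * x + t * y)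

section IntegralIio

variable {f : ℝ → ℝ}

theorem integral_Iio_comp_add_right (u d : ℝ) :
    ∫ s in Iio u, f (s + d) = ∫ s in Iio (u + d), f s := by
  have h := (measurePreserving_add_right volume d).setIntegral_preimage_emb
    (measurableEmbedding_addRight d) f (Iio (u + d))
  rwa [preimage_add_const_Iio, add_sub_cancel_right] at h

theorem IntegrableOn.comp_add_right_Iio {u d : ℝ} (hf : IntegrableOn f (Iio (u + d))) :
    IntegrableOn (fun s => f (s + d)) (Iio u) := by
  have h := (measurePreserving_add_right volume d).integrableOn_comp_preimage
    (measurableEmbedding_addRight d) (f := f) (s := Iio (u + d))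
  rw [preimage_add_const_Iio, add_sub_cancel_right] at h
  exact h.2 hf

theorem integral_Iio_eq_add_integral_Ico {a b : ℝ} (hb : IntegrableOn f (Iio b)) (hab : a ≤ b) :
    ∫ s in Iio b, f s = (∫ s in Iio a, f s) + ∫ s in Ico a b, f s := by
  rw [← setIntegral_union ((Iio_disjoint_Ici le_rfl).mono_right Ico_subset_Ici_self)
    measurableSet_Ico (hb.mono_set (Iio_subset_Iio hab)) (hb.mono_set Ico_subset_Iio_self),
    Iio_union_Ico_eq_Iio hab]

theorem integral_Iio_mul_one_add_le {a b c : ℝ} (hb : IntegrableOn f (Iio b)) (hab : a ≤ b)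
    (hc : ∀ s ∈ Ico a b, c * ∫ s in Iio a, f s ≤ f s) :
    (∫ s in Iio a, f s) * (1 + c * (b - a)) ≤ ∫ s in Iio b, f s := by
  have hIco := setIntegral_ge_of_const_le_real measurableSet_Ico (by simp) hc
    (hb.mono_set Ico_subset_Iio_self)
  rw [Real.volume_real_Ico_of_le hab] at hIco
  linarith [integral_Iio_eq_add_integral_Ico hb hab]

theorem integral_Iio_mul_one_sub_le {a b c : ℝ} (hb : IntegrableOn f (Iio b)) (hab : a ≤ b)
    (hc : ∀ s ∈ Ico a b, f s ≤ c * ∫ s in Iio b, f s) :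
    (∫ s in Iio b, f s) * (1 - c * (b - a)) ≤ ∫ s in Iio a, f s := by
  have hIco := setIntegral_mono_on (hb.mono_set Ico_subset_Iio_self)
    (integrableOn_const (by simp)) measurableSet_Ico hc
  rw [setIntegral_const, Real.volume_real_Ico_of_le hab, smul_eq_mul] at hIco
  linarith [integral_Iio_eq_add_integral_Ico hb hab]

theorem integral_Iio_mono (hf : ∀ x, 0 ≤ f x) {a b : ℝ} (hb : IntegrableOn f (Iio b))
    (hab : a ≤ b) : ∫ s in Iio a, f s ≤ ∫ s in Iio b, f s :=
  setIntegral_mono_set hb (ae_of_all _ fun s => hf s) (Iio_subset_Iio hab).eventuallyLE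

end IntegralIio

theorem le_mul_exp_of_forall_mul_one_add_le {G : ℝ → ℝ} {a b c : ℝ} (hab : a ≤ b)
    (hstep : ∀ u v, a ≤ u → u ≤ v → v ≤ b → G u * (1 + c * (v - u)) ≤ G v) :
    G a ≤ G b * exp (c * (a - b)) := by
  have hpow : ∀ n : ℕ, 0 < n → 0 ≤ 1 + c * (b - a) / n →
      G a * (1 + c * (b - a) / n) ^ n ≤ G b := by
    intro n hn hfactor
    set d := (b - a) / n
    have hd0 : 0 ≤ d := div_nonneg (sub_nonneg.2 hab) n.cast_nonneg
    have hnd : (n : ℝ) * d = b - a := mul_div_cancel₀ _ (by positivity)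
    rw [mul_div_assoc] at hfactor ⊢
    have hiter : ∀ k ≤ n, G a * (1 + c * d) ^ k ≤ G (a + k * d) := by
      intro k
      induction k with
      | zero => simp
      | succ k ih =>
        intro hk
        have hkn : (k : ℝ) + 1 ≤ n := by exact_mod_cast hk
        calc G a * (1 + c * d) ^ (k + 1) = G a * (1 + c * d) ^ k * (1 + c * d) := by ring
          _ ≤ G (a + k * d) * (1 + c * d) :=
            mul_le_mul_of_nonneg_right (ih (by omega)) hfactor
          _ ≤ G (a + (k + 1 : ℕ) * d) := by
            convert hstep (a + k * d) (a + (k + 1 : ℕ) * d)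
              (le_add_of_nonneg_right (by positivity)) (by push_cast; nlinarith)
              (by push_cast; nlinarith) using 3
            push_cast; ring
    simpa [hnd] using hiter n le_rfl
  have hlim : Tendsto (fun n : ℕ => G a * (1 + c * (b - a) / n) ^ n) atTop
      (𝓝 (G a * exp (c * (b - a)))) :=
    (tendsto_one_add_div_pow_exp _).const_mul _
  have hnonneg : ∀ᶠ n : ℕ in atTop, 0 ≤ 1 + c * (b - a) / n := by
    have := (tendsto_const_div_atTop_nhds_zero_nat (c * (b - a))).const_add 1
    rw [add_zero] at this
    exact this.eventually_const_le zero_lt_one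
  have hexp : G a * exp (c * (b - a)) ≤ G b :=
    le_of_tendsto hlim (((eventually_gt_atTop 0).and hnonneg).mono fun n hn => hpow n hn.1 hn.2)
  calc G a = G a * exp (c * (b - a)) * exp (c * (a - b)) := by
        rw [mul_assoc, ← exp_add, ← mul_add, sub_add_sub_cancel, sub_self, mul_zero, exp_zero,
          mul_one]
    _ ≤ G b * exp (c * (a - b)) := mul_le_mul_of_nonneg_right hexp (exp_pos _).le

namespace IsLogConcave

variable {f : ℝ → ℝ}

theorem mul_le_mul_add_sub (hf : IsLogConcave f) {s u v : ℝ} (hsu : s ≤ u) (huv : u ≤ v) :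
    f s * f v ≤ f u * f (s + v - u) := by
  obtain ⟨θ, ⟨hθ₀, hθ₁⟩, rfl⟩ : ∃ θ ∈ Icc (0 : ℝ) 1, (1 - θ) * s + θ * v = u := by
    have hu : u ∈ segment ℝ s v := by rw [segment_eq_Icc (hsu.trans huv)]; exact ⟨hsu, huv⟩
    simpa [segment_eq_image] using hu
  have h₁ := hf.rpow_mul_rpow_le s v θ hθ₀ hθ₁
  have h₂ := hf.rpow_mul_rpow_le s v (1 - θ) (by linarith) (by linarith)
  rw [sub_sub_cancel, show θ * s + (1 - θ) * v = s + v - ((1 - θ) * s + θ * v) by ring] at h₂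
  calc f s * f v = (f s ^ (1 - θ) * f v ^ θ) * (f s ^ θ * f v ^ (1 - θ)) := by
        rw [mul_mul_mul_comm, ← rpow_add' (hf.nonneg s) (by norm_num),
          ← rpow_add' (hf.nonneg v) (by norm_num)]
        norm_num
    _ ≤ _ := mul_le_mul h₁ h₂ (mul_nonneg (rpow_nonneg (hf.nonneg s) _)
        (rpow_nonneg (hf.nonneg v) _)) (hf.nonneg _)

theorem mul_integral_Iio_le (hf : IsLogConcave f) {u v : ℝ} (huv : u ≤ v)
    (hv : IntegrableOn f (Iio v)) :
    f v * ∫ s in Iio u, f s ≤ f u * ∫ s in Iio v, f s := by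
  have hshift : IntegrableOn (fun s => f (s + (v - u))) (Iio u) :=
    IntegrableOn.comp_add_right_Iio (by rwa [add_sub_cancel])
  calc f v * ∫ s in Iio u, f s = ∫ s in Iio u, f v * f s := (integral_const_mul _ _).symm
    _ ≤ ∫ s in Iio u, f u * f (s + (v - u)) := by
      refine setIntegral_mono_on ((hv.mono_set (Iio_subset_Iio huv)).const_mul _)
        (hshift.const_mul _) measurableSet_Iio fun s hs => ?_
      rw [mul_comm, ← add_sub_assoc]
      exact hf.mul_le_mul_add_sub hs.le huv
    _ = f u * ∫ s in Iio v, f s := by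
      rw [integral_const_mul, integral_Iio_comp_add_right, add_sub_cancel]

theorem div_integral_Iio_mul_le (hf : IsLogConcave f) {a s z : ℝ} (hz : IntegrableOn f (Iio z))
    (hFz : 0 < ∫ s in Iio z, f s) (has : a ≤ s) (hsz : s ≤ z) :
    f z / (∫ s in Iio z, f s) * ∫ s in Iio a, f s ≤ f s := by
  rw [div_mul_eq_mul_div, div_le_iff₀ hFz]
  calc f z * ∫ s in Iio a, f s ≤ f z * ∫ r in Iio s, f r :=
        mul_le_mul_of_nonneg_left
          (integral_Iio_mono hf.nonneg (hz.mono_set (Iio_subset_Iio hsz)) has) (hf.nonneg z)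
    _ ≤ f s * ∫ s in Iio z, f s := hf.mul_integral_Iio_le hsz hz

theorem le_div_integral_Iio_mul (hf : IsLogConcave f) {b s z : ℝ} (hb : IntegrableOn f (Iio b))
    (hFz : 0 < ∫ s in Iio z, f s) (hzs : z ≤ s) (hsb : s ≤ b) :
    f s ≤ f z / (∫ s in Iio z, f s) * ∫ s in Iio b, f s := by
  rw [div_mul_eq_mul_div, le_div_iff₀ hFz]
  calc f s * ∫ s in Iio z, f s ≤ f z * ∫ r in Iio s, f r :=
        hf.mul_integral_Iio_le hzs (hb.mono_set (Iio_subset_Iio hsb))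
    _ ≤ f z * ∫ s in Iio b, f s :=
        mul_le_mul_of_nonneg_left (integral_Iio_mono hf.nonneg hb hsb) (hf.nonneg z)

theorem of_le_mul_exp {G : ℝ → ℝ} (hG : ∀ x, 0 ≤ G x) (hmono : Monotone G)
    (htangent : ∀ z, 0 < G z → ∃ ρ, ∀ w, G w ≤ G z * exp (ρ * (w - z))) : IsLogConcave G := by
  refine ⟨hG, fun x y t ht₀ ht₁ => ?_⟩
  set z := (1 - t) * x + t * y with hz
  rcases (hG z).lt_or_eq with hGz | hGz
  · obtain ⟨ρ, hρ⟩ := htangent z hGz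
    calc G x ^ (1 - t) * G y ^ t
        ≤ (G z * exp (ρ * (x - z))) ^ (1 - t) * (G z * exp (ρ * (y - z))) ^ t := by
          gcongr
          exacts [rpow_nonneg (hG y) t, hG x, hρ x, hG y, hρ y]
      _ = G z ^ ((1 - t) + t) * exp (ρ * ((1 - t) * x + t * y - z)) := by
          rw [mul_rpow hGz.le (exp_pos _).le, mul_rpow hGz.le (exp_pos _).le, ← exp_mul,
            ← exp_mul, mul_mul_mul_comm, ← rpow_add hGz, ← exp_add]
          ring_nf
      _ = G z := by rw [← hz, sub_self, mul_zero, exp_zero, mul_one, sub_add_cancel, rpow_one]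
  · -- If `G z = 0`, monotonicity kills the factor at `min x y ≤ z`.
    rcases ht₀.eq_or_lt with rfl | ht₀
    · simp [z]
    rcases ht₁.eq_or_lt with rfl | ht₁
    · simp [z]
    rcases le_total x y with hxy | hyx
    · have hx : G x = 0 := le_antisymm (hGz ▸ hmono (by nlinarith)) (hG x)
      simp [hx, zero_rpow (sub_pos.2 ht₁).ne', hG z]
    · have hy : G y = 0 := le_antisymm (hGz ▸ hmono (by nlinarith)) (hG y)
      simp [hy, zero_rpow ht₀.ne', hG z]

theorem integral_Iio_le_mul_exp (hf : IsLogConcave f) (hint : ∀ z, IntegrableOn f (Iio z))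
    {z : ℝ} (hFz : 0 < ∫ s in Iio z, f s) (w : ℝ) :
    ∫ s in Iio w, f s ≤ (∫ s in Iio z, f s) * exp (f z / (∫ s in Iio z, f s) * (w - z)) := by
  set ρ := f z / ∫ s in Iio z, f s
  rcases le_total w z with hwz | hzw
  · exact le_mul_exp_of_forall_mul_one_add_le hwz fun u v _ huv hvz =>
      integral_Iio_mul_one_add_le (hint v) huv fun s hs =>
        hf.div_integral_Iio_mul_le (hint z) hFz hs.1 (hs.2.le.trans hvz)
  · -- To the right of `z`, run the same argument for `x ↦ F (-x)`.
    have hreflected := le_mul_exp_of_forall_mul_one_add_le (G := fun x => ∫ s in Iio (-x), f s)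
      (c := -ρ) (neg_le_neg hzw) fun p q _ hpq hqz => by
        convert integral_Iio_mul_one_sub_le (hint (-p)) (neg_le_neg hpq) fun s hs =>
          hf.le_div_integral_Iio_mul (hint (-p)) hFz ((le_neg.2 hqz).trans hs.1) hs.2.le
          using 2
        ring
    simp only [neg_neg] at hreflected
    convert hreflected using 3
    ring

theorem integral_Iio (hf : IsLogConcave f) (hint : ∀ z, IntegrableOn f (Iio z)) :
    IsLogConcave fun z => ∫ s in Iio z, f s :=
  .of_le_mul_exp (fun _ => setIntegral_nonneg measurableSet_Iio fun s _ => hf.nonneg s)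
    (fun _ b hab => integral_Iio_mono hf.nonneg (hint b) hab)
    fun _ hFz => ⟨_, hf.integral_Iio_le_mul_exp hint hFz⟩

end IsLogConcave

theorem stmt_1_general (f : ℝ → ℝ)
    (hnonneg : ∀ x, 0 ≤ f x)
    (hlc : ∀ x y t : ℝ, 0 ≤ t → t ≤ 1 →
      f x ^ (1 - t) * f y ^ t ≤ f ((1 - t) * x + t * y))
    (hint : ∀ z : ℝ, IntegrableOn f (Set.Iio z)) :
    ∀ x y t : ℝ, 0 ≤ t → t ≤ 1 →
      (∫ s in Set.Iio x, f s) ^ (1 - t) * (∫ s in Set.Iio y, f s) ^ t ≤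
        ∫ s in Set.Iio ((1 - t) * x + t * y), f s :=
  (IsLogConcave.integral_Iio ⟨hnonneg, hlc⟩ hint).rpow_mul_rpow_le

/-- If `f` is measurable, log-concave, and integrable on every
`(−∞, z)`, then `F z = ∫_{(−∞,z)} f` is log-concave. -/
theorem stmt_1 (f : ℝ → ℝ) (hmeas : Measurable f)
    (hnonneg : ∀ x, 0 ≤ f x)
    (hlc : ∀ x y t : ℝ, 0 ≤ t → t ≤ 1 →
      f x ^ (1 - t) * f y ^ t ≤ f ((1 - t) * x + t * y))
    (hint : ∀ z : ℝ, IntegrableOn f (Set.Iio z)) :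
    ∀ x y t : ℝ, 0 ≤ t → t ≤ 1 →
      (∫ s in Set.Iio x, f s) ^ (1 - t) * (∫ s in Set.Iio y, f s) ^ t ≤
        ∫ s in Set.Iio ((1 - t) * x + t * y), f s :=
  stmt_1_general f hnonneg hlc hint
end

section
/- Let f : ℝ → ℝ be measurable, log-concave, and integrable on (z, ∞) for every z ∈ ℝ. Define G(z) = ∫_{(z,∞)} f(s) ds (integral with respect to Lebesgue measure). Then G is log-concave, i.e. G((1−t)·x + t·y) ≥ G(x)^{1−t} · G(y)^t for all x, y ∈ ℝ and t ∈ [0,1]. -/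
/-!
Write `G z = ∫_{(z,∞)} f`. For `u ≤ w` and `Δ ≥ 0`, log-concavity of `f`, applied to the two convex
combinations `u + Δ` and `w` of `u` and `w + Δ`, gives `f u f (w + Δ) ≤ f (u + Δ) f w`. Integrating
this over `u ∈ (m - Δ, m]`, `w ∈ (m, ∞)` gives `I G (m + Δ) ≤ J G m` with `I = ∫_{(m-Δ,m]} f` and
`J = ∫_{(m,m+Δ]} f`; since `G (m - Δ) = I + G m` and `G m = J + G (m + Δ)`, this is the midpoint
inequality `G (m - Δ) G (m + Δ) ≤ G m ^ 2`. Hence `log G` is midpoint concave on the interval where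
`G > 0`, and, `G` being continuous, concave there.
-/

open MeasureTheory Set

theorem Real.midpoint_eq_add_div_two (a b : ℝ) : midpoint ℝ a b = (a + b) / 2 := by
  rw [midpoint_eq_smul_add, invOf_eq_inv, smul_eq_mul]
  ring

theorem min_le_of_midpoint_concaveOn_unitInterval {ψ : ℝ → ℝ} (hψ : ContinuousOn ψ (Icc 0 1))
    (hmid : ∀ r ∈ Icc (0 : ℝ) 1, ∀ u ∈ Icc (0 : ℝ) 1,
      midpoint ℝ (ψ r) (ψ u) ≤ ψ (midpoint ℝ r u))
    {t : ℝ} (ht : t ∈ Icc (0 : ℝ) 1) : min (ψ 0) (ψ 1) ≤ ψ t := by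
  by_contra! hlt
  obtain ⟨t₀, ht₀, hmin⟩ := isCompact_Icc.exists_isMinOn ⟨t, ht⟩ hψ
  -- Take the leftmost minimiser `l`; midpoint concavity at `l = midpoint (l - d) (l + d)`
  -- forces `ψ (l - d) = ψ l`.
  have hA : IsCompact (Icc 0 1 ∩ ψ ⁻¹' {ψ t₀}) :=
    isCompact_Icc.of_isClosed_subset
      (hψ.preimage_isClosed_of_isClosed isClosed_Icc isClosed_singleton) inter_subset_left
  obtain ⟨l, ⟨hl, hψl⟩, hleast⟩ := hA.exists_isLeast ⟨t₀, ht₀, rfl⟩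
  rw [mem_preimage, mem_singleton_iff] at hψl
  have hψl_lt : ψ l < min (ψ 0) (ψ 1) := hψl ▸ (hmin ht).trans_lt hlt
  have hl₀ : 0 < l := hl.1.lt_of_ne (by rintro rfl; exact (min_le_left _ _).not_gt hψl_lt)
  have hl₁ : l < 1 := hl.2.lt_of_ne (by rintro rfl; exact (min_le_right _ _).not_gt hψl_lt)
  set d := min l (1 - l)
  have hd : 0 < d := lt_min hl₀ (sub_pos.2 hl₁)
  have hmem_sub : l - d ∈ Icc (0 : ℝ) 1 :=
    ⟨sub_nonneg.2 (min_le_left _ _), by linarith⟩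
  have hmem_add : l + d ∈ Icc (0 : ℝ) 1 :=
    ⟨by linarith, by linarith [min_le_right l (1 - l)]⟩
  have hconc := hmid _ hmem_sub _ hmem_add
  rw [Real.midpoint_eq_add_div_two, Real.midpoint_eq_add_div_two,
    show (l - d + (l + d)) / 2 = l by ring] at hconc
  have hadd : ψ t₀ ≤ ψ (l + d) := hmin hmem_add
  have hsub : ψ (l - d) = ψ t₀ := le_antisymm (by linarith) (hmin hmem_sub)
  linarith [hleast ⟨hmem_sub, hsub⟩]

theorem concaveOn_of_continuousOn_of_midpoint {E : Type*} [AddCommGroup E] [Module ℝ E]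
    [TopologicalSpace E] [IsTopologicalAddGroup E] [ContinuousSMul ℝ E] {s : Set E} {φ : E → ℝ}
    (hs : Convex ℝ s) (hφ : ContinuousOn φ s)
    (hmid : ∀ a ∈ s, ∀ b ∈ s, midpoint ℝ (φ a) (φ b) ≤ φ (midpoint ℝ a b)) :
    ConcaveOn ℝ s φ := by
  refine ⟨hs, fun x hx y hy a b ha hb hab => ?_⟩
  set c := AffineMap.lineMap (k := ℝ) x y
  set L := AffineMap.lineMap (k := ℝ) (φ x) (φ y)
  have hc : MapsTo c (Icc 0 1) s := fun r hr => hs.lineMap_mem hx hy hr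
  -- `φ` minus its chord along the segment from `x` to `y` is ≥ 0 by the minimum principle.
  have hψ : ContinuousOn (fun r => φ (c r) - L r) (Icc 0 1) :=
    (hφ.comp AffineMap.lineMap_continuous.continuousOn hc).sub
      AffineMap.lineMap_continuous.continuousOn
  have hψmid : ∀ r ∈ Icc (0 : ℝ) 1, ∀ u ∈ Icc (0 : ℝ) 1,
      midpoint ℝ (φ (c r) - L r) (φ (c u) - L u) ≤ φ (c (midpoint ℝ r u)) - L (midpoint ℝ r u) := by
    intro r hr u hu
    have h := hmid _ (hc hr) _ (hc hu)
    rw [AffineMap.map_midpoint, AffineMap.map_midpoint]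
    simp only [Real.midpoint_eq_add_div_two] at h ⊢
    linarith
  have key :=
    min_le_of_midpoint_concaveOn_unitInterval hψ hψmid ⟨hb, hab ▸ le_add_of_nonneg_left ha⟩
  rw [AffineMap.lineMap_apply_zero, AffineMap.lineMap_apply_zero, AffineMap.lineMap_apply_one,
    AffineMap.lineMap_apply_one, sub_self, sub_self, min_self, AffineMap.lineMap_apply_module,
    AffineMap.lineMap_apply_module, ← hab, add_sub_cancel_right, smul_eq_mul, smul_eq_mul] at key
  simpa only [smul_eq_mul, sub_nonneg] using key

theorem setIntegral_mul_setIntegral_le_of_forall {α : Type*} [MeasurableSpace α] {μ : Measure α}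
    {f g : α → ℝ} {S T : Set α} (hS : MeasurableSet S) (hT : MeasurableSet T)
    (hf₀ : ∀ x, 0 ≤ f x) (hg₀ : ∀ x, 0 ≤ g x) (hfT : IntegrableOn f T μ)
    (hgS : IntegrableOn g S μ) (hle : ∀ u ∈ S, ∀ w ∈ T, f u * g w ≤ g u * f w) :
    (∫ u in S, f u ∂μ) * (∫ w in T, g w ∂μ) ≤ (∫ u in S, g u ∂μ) * ∫ w in T, f w ∂μ := by
  rw [← integral_mul_const, ← integral_mul_const]
  refine integral_mono_of_nonneg
    (ae_of_all _ fun u => mul_nonneg (hf₀ u) (integral_nonneg hg₀)) (hgS.mul_const _) ?_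
  filter_upwards [ae_restrict_mem hS] with u hu
  rw [← integral_const_mul, ← integral_const_mul]
  refine integral_mono_of_nonneg
    (ae_of_all _ fun w => mul_nonneg (hf₀ u) (hg₀ w)) (hfT.const_mul _) ?_
  filter_upwards [ae_restrict_mem hT] with w hw using hle u hu w hw

def LogConcave (f : ℝ → ℝ) : Prop :=
  (∀ x, 0 ≤ f x) ∧
    ∀ x y t : ℝ, 0 ≤ t → t ≤ 1 → f x ^ (1 - t) * f y ^ t ≤ f ((1 - t) * x + t * y)

namespace LogConcave

variable {f : ℝ → ℝ}

theorem mul_le_mul_shift (hf : LogConcave f) {u w Δ : ℝ} (huw : u ≤ w) (hΔ : 0 ≤ Δ) :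
    f u * f (w + Δ) ≤ f (u + Δ) * f w := by
  rcases hΔ.eq_or_lt with rfl | hΔ
  · simp
  have hd : 0 < w + Δ - u := by linarith
  set s := Δ / (w + Δ - u)
  have hs : s * (w + Δ - u) = Δ := div_mul_cancel₀ Δ hd.ne'
  have hs₀ : 0 ≤ s := div_nonneg hΔ.le hd.le
  have hs₁ : s ≤ 1 := (div_le_one hd).2 (by linarith)
  -- `u + Δ` and `w` are the convex combinations of `u` and `w + Δ` with weights `s` and `1 - s`.
  have h₁ := hf.2 u (w + Δ) s hs₀ hs₁
  have h₂ := hf.2 u (w + Δ) (1 - s) (sub_nonneg.2 hs₁) (by linarith)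
  rw [show (1 - s) * u + s * (w + Δ) = u + Δ by linear_combination hs] at h₁
  rw [sub_sub_cancel, show s * u + (1 - s) * (w + Δ) = w by linear_combination -hs] at h₂
  calc f u * f (w + Δ)
      = (f u ^ (1 - s) * f (w + Δ) ^ s) * (f u ^ s * f (w + Δ) ^ (1 - s)) := by
        rw [mul_mul_mul_comm, ← Real.rpow_add' (hf.1 _) (by norm_num),
          ← Real.rpow_add' (hf.1 _) (by norm_num), sub_add_cancel, add_sub_cancel,
          Real.rpow_one, Real.rpow_one]
    _ ≤ f (u + Δ) * f w :=
        mul_le_mul h₁ h₂ (mul_nonneg (Real.rpow_nonneg (hf.1 _) _) (Real.rpow_nonneg (hf.1 _) _))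
          (hf.1 _)

theorem of_concaveOn_log {g : ℝ → ℝ} (hg₀ : ∀ x, 0 ≤ g x)
    (hg : ConcaveOn ℝ {z | 0 < g z} (Real.log ∘ g)) : LogConcave g := by
  refine ⟨hg₀, fun x y t ht₀ ht₁ => ?_⟩
  rcases ht₁.eq_or_lt with rfl | ht₁
  · simp
  rcases ht₀.eq_or_lt with rfl | ht₀
  · simp
  by_cases hpos : 0 < g x ∧ 0 < g y
  · obtain ⟨hx, hy⟩ := hpos
    have hconc := hg.2 hx hy (sub_nonneg.2 ht₁.le) ht₀.le (sub_add_cancel 1 t)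
    have hz : 0 < g ((1 - t) * x + t * y) :=
      hg.1 hx hy (sub_nonneg.2 ht₁.le) ht₀.le (sub_add_cancel 1 t)
    simp only [smul_eq_mul, Function.comp] at hconc
    rw [Real.rpow_def_of_pos hx, Real.rpow_def_of_pos hy, ← Real.exp_add, ← Real.exp_log hz]
    exact Real.exp_le_exp.2 (by linarith)
  · have hzero : g x ^ (1 - t) * g y ^ t = 0 := by
      rcases not_and_or.1 hpos with hx | hy
      · rw [← (hg₀ x).antisymm (not_lt.1 hx), Real.zero_rpow (sub_pos.2 ht₁).ne', zero_mul]
      · rw [← (hg₀ y).antisymm (not_lt.1 hy), Real.zero_rpow ht₀.ne', mul_zero]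
    exact hzero ▸ hg₀ _

end LogConcave

noncomputable def tailIntegral (f : ℝ → ℝ) (z : ℝ) : ℝ := ∫ s in Ioi z, f s

section TailIntegral

variable {f : ℝ → ℝ}

theorem tailIntegral_nonneg (hf₀ : ∀ x, 0 ≤ f x) (z : ℝ) : 0 ≤ tailIntegral f z :=
  integral_nonneg hf₀

theorem tailIntegral_eq_integral_Ioc_add (hint : ∀ z, IntegrableOn f (Ioi z)) {a b : ℝ}
    (hab : a ≤ b) : tailIntegral f a = (∫ s in Ioc a b, f s) + tailIntegral f b := by
  rw [← intervalIntegral.integral_of_le hab, ← intervalIntegral.integral_Ioi_sub_Ioi (hint a) hab,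
    tailIntegral, tailIntegral, sub_add_cancel]

theorem antitone_tailIntegral (hf₀ : ∀ x, 0 ≤ f x) (hint : ∀ z, IntegrableOn f (Ioi z)) :
    Antitone (tailIntegral f) := fun a b hab => by
  rw [tailIntegral_eq_integral_Ioc_add hint hab]
  exact le_add_of_nonneg_left (setIntegral_nonneg measurableSet_Ioc fun s _ => hf₀ s)

theorem continuous_tailIntegral (hint : ∀ z, IntegrableOn f (Ioi z)) :
    Continuous (tailIntegral f) :=
  continuous_iff_continuousAt.2 fun z =>
    ((hint (z - 1)).continuousOn_Ici_primitive_Ioi).continuousAt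
      (Ici_mem_nhds (sub_one_lt z))

theorem LogConcave.tailIntegral_sub_mul_tailIntegral_add_le (hf : LogConcave f)
    (hint : ∀ z, IntegrableOn f (Ioi z)) (m Δ : ℝ) :
    tailIntegral f (m - Δ) * tailIntegral f (m + Δ) ≤ tailIntegral f m ^ 2 := by
  wlog hΔ : 0 ≤ Δ generalizing Δ
  · simpa [mul_comm, sub_eq_add_neg] using this (-Δ) (by linarith)
  have hshift := measurePreserving_add_right (volume : Measure ℝ) Δ
  have hemb := measurableEmbedding_addRight Δ
  have hS : Ioc (m - Δ) m = (· + Δ) ⁻¹' Ioc m (m + Δ) := by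
    rw [preimage_add_const_Ioc, add_sub_cancel_right]
  have hgS : IntegrableOn (fun u => f (u + Δ)) (Ioc (m - Δ) m) := by
    rw [hS]
    exact (hshift.integrableOn_comp_preimage hemb).2 ((hint m).mono_set Ioc_subset_Ioi_self)
  have key := setIntegral_mul_setIntegral_le_of_forall measurableSet_Ioc measurableSet_Ioi hf.1
    (fun x => hf.1 (x + Δ)) (hint m) hgS
    (fun u hu w hw => hf.mul_le_mul_shift (hu.2.trans hw.le) hΔ)
  have hJ : ∫ u in Ioc (m - Δ) m, f (u + Δ) = ∫ s in Ioc m (m + Δ), f s := by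
    rw [hS]
    exact hshift.setIntegral_preimage_emb hemb f _
  have hG : ∫ w in Ioi m, f (w + Δ) = tailIntegral f (m + Δ) := by
    rw [tailIntegral, ← hshift.setIntegral_preimage_emb hemb f, preimage_add_const_Ioi,
      add_sub_cancel_right]
  rw [hJ, hG] at key
  change _ ≤ _ * tailIntegral f m at key
  rw [tailIntegral_eq_integral_Ioc_add hint (sub_le_self m hΔ)]
  linear_combination key - tailIntegral f m *
    tailIntegral_eq_integral_Ioc_add hint (le_add_of_nonneg_right hΔ : m ≤ m + Δ)

theorem LogConcave.concaveOn_log_tailIntegral (hf : LogConcave f)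
    (hint : ∀ z, IntegrableOn f (Ioi z)) :
    ConcaveOn ℝ {z | 0 < tailIntegral f z} (Real.log ∘ tailIntegral f) := by
  have hconv : Convex ℝ {z | 0 < tailIntegral f z} :=
    OrdConnected.convex ⟨fun _ _ _ hb _ hc => hb.trans_le (antitone_tailIntegral hf.1 hint hc.2)⟩
  refine concaveOn_of_continuousOn_of_midpoint hconv
    ((continuous_tailIntegral hint).continuousOn.log fun z hz => hz.ne') fun a ha b hb => ?_
  have h := hf.tailIntegral_sub_mul_tailIntegral_add_le hint (midpoint ℝ a b) ((b - a) / 2)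
  rw [Real.midpoint_eq_add_div_two, show (a + b) / 2 - (b - a) / 2 = a by ring,
    show (a + b) / 2 + (b - a) / 2 = b by ring] at h
  have hlog := Real.log_le_log (mul_pos ha hb) h
  rw [Real.log_mul ha.ne' hb.ne', Real.log_pow] at hlog
  simp only [Function.comp, Real.midpoint_eq_add_div_two]
  push_cast at hlog
  linarith

end TailIntegral

theorem logConcave_tailIntegral {f : ℝ → ℝ} (hf : LogConcave f)
    (hint : ∀ z, IntegrableOn f (Ioi z)) : LogConcave (tailIntegral f) :=
  LogConcave.of_concaveOn_log (tailIntegral_nonneg hf.1) (hf.concaveOn_log_tailIntegral hint)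

theorem stmt_2_general (f : ℝ → ℝ)
    (hnonneg : ∀ x, 0 ≤ f x)
    (hlc : ∀ x y t : ℝ, 0 ≤ t → t ≤ 1 →
      f x ^ (1 - t) * f y ^ t ≤ f ((1 - t) * x + t * y))
    (hint : ∀ z : ℝ, IntegrableOn f (Set.Ioi z)) :
    ∀ x y t : ℝ, 0 ≤ t → t ≤ 1 →
      (∫ s in Set.Ioi x, f s) ^ (1 - t) * (∫ s in Set.Ioi y, f s) ^ t ≤
        ∫ s in Set.Ioi ((1 - t) * x + t * y), f s :=
  (logConcave_tailIntegral ⟨hnonneg, hlc⟩ hint).2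

/-- If `f` is measurable, log-concave, and integrable on every
`(z, ∞)`, then `G z = ∫_{(z,∞)} f` is log-concave. -/
theorem stmt_2 (f : ℝ → ℝ) (hmeas : Measurable f)
    (hnonneg : ∀ x, 0 ≤ f x)
    (hlc : ∀ x y t : ℝ, 0 ≤ t → t ≤ 1 →
      f x ^ (1 - t) * f y ^ t ≤ f ((1 - t) * x + t * y))
    (hint : ∀ z : ℝ, IntegrableOn f (Set.Ioi z)) :
    ∀ x y t : ℝ, 0 ≤ t → t ≤ 1 →
      (∫ s in Set.Ioi x, f s) ^ (1 - t) * (∫ s in Set.Ioi y, f s) ^ t ≤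
        ∫ s in Set.Ioi ((1 - t) * x + t * y), f s :=
  stmt_2_general f hnonneg hlc hint
end

section
/- Let Φ : ℝ → ℝ be convex, let z ∈ ℝ, assume Φ is differentiable at z, and assume s ↦ exp(−Φ(s)) is integrable on (−∞, z). Then exp(−Φ(z)) + Φ'(z) · ∫_{(−∞,z)} exp(−Φ(s)) ds ≥ 0. -/
/-! Only `d < 0` needs an argument. Then the tangent line of `Φ` at `z` bounds `Φ` from below, so
on `(-∞, z)` the integrand is dominated by `exp (-Φ z) * exp (-d * (s - z))`, whose integral is
`exp (-Φ z) / (-d)`. -/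

open MeasureTheory Set Real

lemma ConvexOn.add_mul_sub_le_of_hasDerivAt_of_lt {S : Set ℝ} {f : ℝ → ℝ} {x y f' : ℝ}
    (hfc : ConvexOn ℝ S f) (hx : x ∈ S) (hy : y ∈ S) (hxy : x < y) (hf' : HasDerivAt f f' y) :
    f y + f' * (x - y) ≤ f x := by
  have hslope := hfc.slope_le_of_hasDerivAt hx hy hxy hf'
  rw [slope_def_field, div_le_iff₀ (sub_pos.2 hxy)] at hslope
  linarith

lemma setIntegral_Iio_le_of_le_mul_exp {g : ℝ → ℝ} {a C z : ℝ} (ha : 0 < a)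
    (hg : IntegrableOn g (Iio z)) (hle : ∀ s < z, g s ≤ C * exp (a * (s - z))) :
    ∫ s in Iio z, g s ≤ C / a := by
  have hsplit : ∀ s, exp (a * (s - z)) = exp (a * s) * exp (-(a * z)) := fun s => by
    rw [← exp_add, mul_sub, sub_eq_add_neg]
  have hexp : IntegrableOn (fun s => exp (a * (s - z))) (Iio z) := by
    simp_rw [hsplit]
    exact ((integrableOn_exp_mul_Iic ha z).mono_set Iio_subset_Iic_self).mul_const _
  calc ∫ s in Iio z, g s ≤ ∫ s in Iio z, C * exp (a * (s - z)) :=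
        setIntegral_mono_on hg (hexp.const_mul C) measurableSet_Iio hle
    _ = C * (exp (a * z) / a * exp (-(a * z))) := by
        simp_rw [hsplit]
        rw [integral_const_mul, integral_mul_const, ← integral_Iic_eq_integral_Iio,
          integral_exp_mul_Iic ha]
    _ = C / a := by
        rw [div_mul_eq_mul_div, ← exp_add, add_neg_cancel, exp_zero, mul_one_div]

/-- For convex `Φ` differentiable at `z`,
`exp(−Φ(z)) + Φ'(z) · ∫_{(−∞,z)} exp(−Φ(s)) ds ≥ 0`. -/
theorem stmt_5 (Φ : ℝ → ℝ) (hΦ : ConvexOn ℝ Set.univ Φ)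
    (z d : ℝ) (hd : HasDerivAt Φ d z)
    (hint : IntegrableOn (fun s => Real.exp (-Φ s)) (Set.Iio z)) :
    0 ≤ Real.exp (-Φ z) + d * ∫ s in Set.Iio z, Real.exp (-Φ s) := by
  rcases le_or_gt 0 d with hd_nonneg | hd_neg
  · positivity
  · have htangent : ∀ s < z, exp (-Φ s) ≤ exp (-Φ z) * exp (-d * (s - z)) := fun s hs => by
      have := hΦ.add_mul_sub_le_of_hasDerivAt_of_lt (mem_univ s) (mem_univ z) hs hd
      rw [← exp_add, exp_le_exp]
      linarith
    have hbound := setIntegral_Iio_le_of_le_mul_exp (neg_pos.2 hd_neg) hint htangent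
    rw [le_div_iff₀' (neg_pos.2 hd_neg)] at hbound
    linarith
end

section
/- Let Φ : ℝ → ℝ be convex, let z ∈ ℝ, assume Φ is differentiable at z, and assume s ↦ exp(−Φ(s)) is integrable on (z, ∞). Then exp(−Φ(z)) − Φ'(z) · ∫_{(z,∞)} exp(−Φ(s)) ds ≥ 0. -/
/-!
A convex function lies above its tangent line at `z`, so on `(z, ∞)` the density `exp (-Φ)` is
dominated by `exp (-Φ z) * exp (-Φ'(z) (s - z))`. When `Φ'(z) > 0` this exponential has integral
`exp (-Φ z) / Φ'(z)`, which gives the inequality; when `Φ'(z) ≤ 0` it is immediate.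
-/

open MeasureTheory Set

theorem ConvexOn.add_mul_sub_le_of_hasDerivAt {S : Set ℝ} {f : ℝ → ℝ} {x y f' : ℝ}
    (hf : ConvexOn ℝ S f) (hx : x ∈ S) (hy : y ∈ S) (hf' : HasDerivAt f f' x) :
    f x + f' * (y - x) ≤ f y := by
  rcases lt_trichotomy x y with hxy | rfl | hyx
  · have hslope := hf.le_slope_of_hasDerivAt hx hy hxy hf'
    rw [slope_def_field, le_div_iff₀ (sub_pos.mpr hxy)] at hslope
    linarith
  · simp
  · have hslope := hf.slope_le_of_hasDerivAt hy hx hyx hf'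
    rw [slope_def_field, div_le_iff₀ (sub_pos.mpr hyx)] at hslope
    linarith

theorem integral_exp_add_mul_mul_exp_neg_mul_Ioi {a d z : ℝ} (hd : 0 < d) :
    ∫ s in Ioi z, Real.exp (a + d * z) * Real.exp (-d * s) = Real.exp a / d := by
  rw [integral_const_mul, integral_exp_mul_Ioi (neg_neg_of_pos hd), neg_div_neg_eq,
    mul_div_assoc', ← Real.exp_add]
  ring_nf

theorem ConvexOn.mul_setIntegral_exp_neg_Ioi_le {Φ : ℝ → ℝ} {z d : ℝ}
    (hΦ : ConvexOn ℝ (Ici z) Φ) (hd : HasDerivAt Φ d z) (hd_pos : 0 < d) :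
    d * ∫ s in Ioi z, Real.exp (-Φ s) ≤ Real.exp (-Φ z) := by
  have tangent : ∀ s ∈ Ioi z,
      Real.exp (-Φ s) ≤ Real.exp (-Φ z + d * z) * Real.exp (-d * s) := by
    intro s hs
    have := hΦ.add_mul_sub_le_of_hasDerivAt self_mem_Ici (Ioi_subset_Ici_self hs) hd
    rw [← Real.exp_add, Real.exp_le_exp]
    linarith
  have dominating : IntegrableOn
      (fun s => Real.exp (-Φ z + d * z) * Real.exp (-d * s)) (Ioi z) :=
    (exp_neg_integrableOn_Ioi z hd_pos).const_mul _
  calc d * ∫ s in Ioi z, Real.exp (-Φ s)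
      ≤ d * ∫ s in Ioi z, Real.exp (-Φ z + d * z) * Real.exp (-d * s) :=
        mul_le_mul_of_nonneg_left
          (setIntegral_mono_of_nonneg (fun s _ => (Real.exp_pos _).le) tangent dominating)
          hd_pos.le
    _ = Real.exp (-Φ z) := by
        rw [integral_exp_add_mul_mul_exp_neg_mul_Ioi hd_pos]
        field_simp

theorem stmt_6_general (Φ : ℝ → ℝ) (hΦ : ConvexOn ℝ Set.univ Φ)
    (z d : ℝ) (hd : HasDerivAt Φ d z) :
    0 ≤ Real.exp (-Φ z) - d * ∫ s in Set.Ioi z, Real.exp (-Φ s) := by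
  rw [sub_nonneg]
  rcases le_or_gt d 0 with hd_nonpos | hd_pos
  · have hI : 0 ≤ ∫ s in Ioi z, Real.exp (-Φ s) :=
      integral_nonneg fun s => (Real.exp_pos _).le
    exact (mul_nonpos_of_nonpos_of_nonneg hd_nonpos hI).trans (Real.exp_pos _).le
  · exact (hΦ.subset (subset_univ _) (convex_Ici z)).mul_setIntegral_exp_neg_Ioi_le hd hd_pos

/-- For convex `Φ` differentiable at `z`,
`exp(−Φ(z)) − Φ'(z) · ∫_{(z,∞)} exp(−Φ(s)) ds ≥ 0`. -/
theorem stmt_6 (Φ : ℝ → ℝ) (hΦ : ConvexOn ℝ Set.univ Φ)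
    (z d : ℝ) (hd : HasDerivAt Φ d z)
    (hint : IntegrableOn (fun s => Real.exp (-Φ s)) (Set.Ioi z)) :
    0 ≤ Real.exp (-Φ z) - d * ∫ s in Set.Ioi z, Real.exp (-Φ s) :=
  stmt_6_general Φ hΦ z d hd
end

section
/- Let Φ : ℝ → ℝ be convex and assume s ↦ exp(−Φ(s)) is integrable on (−∞, z) for every z ∈ ℝ. Then the function ℓ₁ : ℝ → ℝ defined by ℓ₁(z) = −log( ∫_{(−∞,z)} exp(−Φ(s)) ds ) is convex on ℝ. -/
open MeasureTheory Set Real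

/-!
With `F z = ∫_{s<z} exp(-Φ s)`, the derivative of `-log F` is `-exp(-Φ z) / F z`, so it suffices
that `exp(-Φ) / F` is antitone, i.e. `exp(-Φ y) F x ≤ exp(-Φ x) F y` for `x ≤ y`. Convexity of `Φ`
gives `exp(-Φ y) exp(-Φ s) ≤ exp(-Φ x) exp(-Φ (s + y - x))` for `s ≤ x ≤ y`; integrating over
`s < x` and translating by `y - x` turns the right-hand side into `exp(-Φ x) F y`.
-/

theorem ConvexOn.map_add_map_reflect_le {S : Set ℝ} {Φ : ℝ → ℝ} (hΦ : ConvexOn ℝ S Φ)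
    {a b x : ℝ} (ha : a ∈ S) (hb : b ∈ S) (hax : a ≤ x) (hxb : x ≤ b) :
    Φ x + Φ (a + b - x) ≤ Φ a + Φ b := by
  rcases hax.trans hxb |>.eq_or_lt with rfl | hab
  · obtain rfl : x = a := le_antisymm hxb hax
    simp
  -- `x` and its reflection `a + b - x` are complementary convex combinations of `a` and `b`
  set t := (b - x) / (b - a)
  have hba : 0 < b - a := sub_pos.2 hab
  have ht : t * (b - a) = b - x := div_mul_cancel₀ _ hba.ne'
  have ht₀ : 0 ≤ t := div_nonneg (sub_nonneg.2 hxb) hba.le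
  have ht₁ : t ≤ 1 := (div_le_one hba).2 (by linarith)
  have hx := hΦ.2 ha hb ht₀ (sub_nonneg.2 ht₁) (add_sub_cancel t 1)
  have hy := hΦ.2 ha hb (sub_nonneg.2 ht₁) ht₀ (sub_add_cancel 1 t)
  simp only [smul_eq_mul] at hx hy
  rw [show t * a + (1 - t) * b = x by linear_combination -ht] at hx
  rw [show (1 - t) * a + t * b = a + b - x by linear_combination ht] at hy
  linarith

theorem setIntegral_Iio_comp_add_right {E : Type*} [NormedAddCommGroup E] [NormedSpace ℝ E]
    (f : ℝ → E) (x c : ℝ) : ∫ s in Iio x, f (s + c) = ∫ s in Iio (x + c), f s := by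
  simpa using (measurePreserving_add_right volume c).setIntegral_preimage_emb
    (measurableEmbedding_addRight c) f (Iio (x + c))

theorem integrableOn_Iio_comp_add_right_iff {E : Type*} [NormedAddCommGroup E] {f : ℝ → E}
    (x c : ℝ) : IntegrableOn (fun s => f (s + c)) (Iio x) ↔ IntegrableOn f (Iio (x + c)) := by
  simpa [Function.comp_def] using
    (measurePreserving_add_right volume c).integrableOn_comp_preimage
    (measurableEmbedding_addRight c) (f := f) (s := Iio (x + c))

theorem hasDerivAt_integral_Iio {E : Type*} [NormedAddCommGroup E] [NormedSpace ℝ E]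
    [CompleteSpace E] {f : ℝ → E} (hf : Continuous f) (hint : ∀ z, IntegrableOn f (Iio z))
    (z : ℝ) : HasDerivAt (fun w => ∫ s in Iio w, f s) (f z) z := by
  have hsplit : (fun w => ∫ s in Iio w, f s) =
      fun w => (∫ s in Iio z, f s) + ∫ s in z..w, f s := by
    ext w
    rw [← intervalIntegral.integral_Iio_sub_Iio' (hint w) (hint z), add_sub_cancel]
  rw [hsplit]
  exact (intervalIntegral.integral_hasDerivAt_right (hf.intervalIntegrable z z)
    (hf.stronglyMeasurableAtFilter _ _) hf.continuousAt).const_add _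

theorem convexOn_neg_log_of_antitone_logDeriv {F : ℝ → ℝ} (hF : Differentiable ℝ F)
    (hpos : ∀ z, 0 < F z) (hanti : Antitone (logDeriv F)) :
    ConvexOn ℝ univ fun z => -log (F z) := by
  have hlog : Differentiable ℝ fun z => log (F z) := fun z => (hF z).log (hpos z).ne'
  refine Monotone.convexOn_univ_of_deriv hlog.neg ?_
  intro x y hxy
  simp only [deriv.fun_neg, neg_le_neg_iff]
  rw [← Function.comp_def, Real.deriv_log_comp_eq_logDeriv (hF x) (hpos x).ne',
    Real.deriv_log_comp_eq_logDeriv (hF y) (hpos y).ne']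
  exact hanti hxy

theorem exp_neg_mul_integral_Iio_le {Φ : ℝ → ℝ} (hΦ : ConvexOn ℝ univ Φ)
    (hint : ∀ z, IntegrableOn (fun s => exp (-Φ s)) (Iio z)) {x y : ℝ} (hxy : x ≤ y) :
    exp (-Φ y) * ∫ s in Iio x, exp (-Φ s) ≤ exp (-Φ x) * ∫ s in Iio y, exp (-Φ s) := by
  have hpt : ∀ s ∈ Iio x, exp (-Φ y) * exp (-Φ s) ≤ exp (-Φ x) * exp (-Φ (s + (y - x))) := by
    intro s hs
    have := hΦ.map_add_map_reflect_le (mem_univ s) (mem_univ y) hs.le hxy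
    rw [← exp_add, ← exp_add, exp_le_exp, show s + (y - x) = s + y - x by ring]
    linarith
  have hshift : IntegrableOn (fun s => exp (-Φ (s + (y - x)))) (Iio x) :=
    (integrableOn_Iio_comp_add_right_iff (f := fun s => exp (-Φ s)) x (y - x)).2 (hint _)
  calc exp (-Φ y) * ∫ s in Iio x, exp (-Φ s)
      = ∫ s in Iio x, exp (-Φ y) * exp (-Φ s) := (integral_const_mul _ _).symm
    _ ≤ ∫ s in Iio x, exp (-Φ x) * exp (-Φ (s + (y - x))) :=
        setIntegral_mono_on ((hint x).const_mul _) (hshift.const_mul _) measurableSet_Iio hpt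
    _ = exp (-Φ x) * ∫ s in Iio y, exp (-Φ s) := by
        rw [integral_const_mul, setIntegral_Iio_comp_add_right (fun s => exp (-Φ s)),
          add_sub_cancel]

/-- For convex `Φ` with `exp(−Φ)` integrable on every `(−∞, z)`,
the function `ℓ₁(z) = −log(∫_{(−∞,z)} exp(−Φ(s)) ds)` is convex on ℝ. -/
theorem stmt_7 (Φ : ℝ → ℝ) (hΦ : ConvexOn ℝ Set.univ Φ)
    (hint : ∀ z : ℝ, IntegrableOn (fun s => Real.exp (-Φ s)) (Set.Iio z)) :
    ConvexOn ℝ Set.univ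
      (fun z : ℝ => -Real.log (∫ s in Set.Iio z, Real.exp (-Φ s))) := by
  set F : ℝ → ℝ := fun z => ∫ s in Iio z, exp (-Φ s)
  have hcont : Continuous fun s => exp (-Φ s) :=
    (continuousOn_univ.1 (hΦ.continuousOn isOpen_univ)).neg.rexp
  have hderiv : ∀ z, HasDerivAt F (exp (-Φ z)) z := hasDerivAt_integral_Iio hcont hint
  have hpos : ∀ z, 0 < F z := fun z =>
    haveI : NeZero (volume.restrict (Iio z)) := ⟨by simp⟩
    integral_exp_pos (hint z)
  refine convexOn_neg_log_of_antitone_logDeriv (fun z => (hderiv z).differentiableAt) hpos ?_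
  intro x y hxy
  rw [logDeriv_apply, logDeriv_apply, (hderiv x).deriv, (hderiv y).deriv,
    div_le_div_iff₀ (hpos y) (hpos x)]
  exact exp_neg_mul_integral_Iio_le hΦ hint hxy
end

section
/- Let Φ : ℝ → ℝ be convex and assume s ↦ exp(−Φ(s)) is integrable on (z, ∞) for every z ∈ ℝ. Then the function ℓ₂ : ℝ → ℝ defined by ℓ₂(z) = −log( ∫_{(z,∞)} exp(−Φ(s)) ds ) is convex on ℝ. -/
/-!
Write `F z = ∫_{(z,∞)} exp(-Φ)`. Then `ℓ₂' = exp(-Φ) / F`, the hazard rate of the density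
`exp(-Φ)`, so it suffices that this ratio is nondecreasing. For `x ≤ y` and `s > x` convexity
of `Φ` gives `Φ y + Φ s ≤ Φ x + Φ (s + (y - x))`; exponentiating and integrating over `s > x`,
after translating `F y` to an integral over `(x, ∞)`, yields `exp(-Φ x) F y ≤ exp(-Φ y) F x`.
-/

open MeasureTheory Set Real

theorem ConvexOn.map_add_sub_map_le_of_le {𝕜 : Type*} [Field 𝕜] [LinearOrder 𝕜]
    [IsStrictOrderedRing 𝕜] {S : Set 𝕜} {f : 𝕜 → 𝕜} (hf : ConvexOn 𝕜 S f) {x s d : 𝕜}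
    (hx : x ∈ S) (hsd : s + d ∈ S) (hxs : x ≤ s) (hd : 0 ≤ d) :
    f (x + d) - f x ≤ f (s + d) - f s := by
  obtain rfl | hd := hd.eq_or_lt
  · simp
  set b := s + d
  have hbx : 0 < b - x := by linarith
  set t := d / (b - x)
  have htd : t * (b - x) = d := div_mul_cancel₀ _ hbx.ne'
  have ht : 0 ≤ t := by positivity
  have ht' : 0 ≤ 1 - t := by
    rw [sub_nonneg, div_le_one hbx]
    linarith
  -- `x + d` and `s` are the two convex combinations of `x` and `s + d` with weights `t`, `1 - t`
  have hleft := hf.2 hx hsd ht' ht (by ring)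
  have hright := hf.2 hx hsd ht ht' (by ring)
  simp only [smul_eq_mul] at hleft hright
  rw [show (1 - t) * x + t * b = x + d by linear_combination htd] at hleft
  rw [show t * x + (1 - t) * b = s by linear_combination -htd] at hright
  linarith

theorem integral_Ioi_comp_add_right (f : ℝ → ℝ) (a c : ℝ) :
    ∫ s in Ioi a, f (s + c) = ∫ s in Ioi (a + c), f s := by
  simpa using (measurePreserving_add_right volume c).setIntegral_preimage_emb
    (measurableEmbedding_addRight c) f (Ioi (a + c))

theorem integrableOn_Ioi_comp_add_right {f : ℝ → ℝ} {a : ℝ} (c : ℝ)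
    (hf : IntegrableOn f (Ioi (a + c))) : IntegrableOn (fun s => f (s + c)) (Ioi a) := by
  simpa [Function.comp_def] using
    ((measurePreserving_add_right volume c).integrableOn_comp_preimage
      (measurableEmbedding_addRight c)).2 hf

theorem hasDerivAt_integral_Ioi {f : ℝ → ℝ} (hf : ∀ a, IntegrableOn f (Ioi a)) {z : ℝ}
    (hfz : ContinuousAt f z) : HasDerivAt (fun x => ∫ s in Ioi x, f s) (-f z) z := by
  have hsplit :
      (fun x => ∫ s in Ioi x, f s) = fun x => (∫ s in Ioi z, f s) - ∫ s in z..x, f s :=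
    funext fun x => by rw [← intervalIntegral.integral_Ioi_sub_Ioi' (hf z) (hf x), sub_sub_cancel]
  rw [hsplit]
  exact (intervalIntegral.integral_hasDerivAt_right IntervalIntegrable.refl
    ⟨Ioi (z - 1), Ioi_mem_nhds (by linarith), (hf _).aestronglyMeasurable⟩ hfz).const_sub _

theorem integral_Ioi_pos {f : ℝ → ℝ} (hpos : ∀ s, 0 < f s) {z : ℝ}
    (hf : IntegrableOn f (Ioi z)) : 0 < ∫ s in Ioi z, f s := by
  rw [setIntegral_pos_iff_support_of_nonneg_ae (.of_forall fun s => (hpos s).le) hf,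
    Function.support_eq_univ fun s => (hpos s).ne', univ_inter, Real.volume_Ioi]
  exact ENNReal.zero_lt_top

theorem ConvexOn.exp_neg_mul_integral_Ioi_le {Φ : ℝ → ℝ} (hΦ : ConvexOn ℝ univ Φ) {x y : ℝ}
    (hx : IntegrableOn (fun s => exp (-Φ s)) (Ioi x))
    (hy : IntegrableOn (fun s => exp (-Φ s)) (Ioi y)) (hxy : x ≤ y) :
    exp (-Φ x) * ∫ s in Ioi y, exp (-Φ s) ≤
      exp (-Φ y) * ∫ s in Ioi x, exp (-Φ s) := by
  have hy' : IntegrableOn (fun s => exp (-Φ (s + (y - x)))) (Ioi x) :=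
    integrableOn_Ioi_comp_add_right (y - x) (by rwa [add_sub_cancel])
  calc exp (-Φ x) * ∫ s in Ioi y, exp (-Φ s)
      = ∫ s in Ioi x, exp (-Φ x) * exp (-Φ (s + (y - x))) := by
        rw [integral_const_mul, integral_Ioi_comp_add_right (fun s => exp (-Φ s)),
          add_sub_cancel]
    _ ≤ ∫ s in Ioi x, exp (-Φ y) * exp (-Φ s) := by
        refine setIntegral_mono_on (hy'.const_mul _) (hx.const_mul _) measurableSet_Ioi
          fun s hs => ?_
        have := hΦ.map_add_sub_map_le_of_le (mem_univ x) (mem_univ (s + (y - x)))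
          (le_of_lt hs) (sub_nonneg.2 hxy)
        rw [add_sub_cancel] at this
        rw [← exp_add, ← exp_add, exp_le_exp]
        linarith
    _ = exp (-Φ y) * ∫ s in Ioi x, exp (-Φ s) := integral_const_mul _ _

/-- For convex `Φ` with `exp(−Φ)` integrable on every `(z, ∞)`,
the function `ℓ₂(z) = −log(∫_{(z,∞)} exp(−Φ(s)) ds)` is convex on ℝ. -/
theorem stmt_8 (Φ : ℝ → ℝ) (hΦ : ConvexOn ℝ Set.univ Φ)
    (hint : ∀ z : ℝ, IntegrableOn (fun s => Real.exp (-Φ s)) (Set.Ioi z)) :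
    ConvexOn ℝ Set.univ
      (fun z : ℝ => -Real.log (∫ s in Set.Ioi z, Real.exp (-Φ s))) := by
  have hpos z : 0 < ∫ s in Ioi z, exp (-Φ s) :=
    integral_Ioi_pos (fun _ => exp_pos _) (hint z)
  have hcont : Continuous fun s => exp (-Φ s) :=
    continuous_exp.comp (continuousOn_univ.1 (hΦ.continuousOn isOpen_univ)).neg
  have hderiv z : HasDerivAt (fun z => -log (∫ s in Ioi z, exp (-Φ s)))
      (exp (-Φ z) / ∫ s in Ioi z, exp (-Φ s)) z :=
    ((hasDerivAt_integral_Ioi hint hcont.continuousAt).log (hpos z).ne').neg.congr_deriv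
      (by ring)
  refine Monotone.convexOn_univ_of_deriv (fun z => (hderiv z).differentiableAt) fun x y hxy => ?_
  rw [(hderiv x).deriv, (hderiv y).deriv, div_le_div_iff₀ (hpos x) (hpos y)]
  exact hΦ.exp_neg_mul_integral_Ioi_le (hint x) (hint y) hxy
end

section
/- Let Φ : ℝ → ℝ be convex, assume s ↦ exp(−Φ(s)) is integrable on (−∞, z) for every z ∈ ℝ, and let c ∈ ℝ^n and τ ∈ ℝ. Then the function x ↦ −log( ∫_{(−∞, τ − ⟨c, x⟩)} exp(−Φ(s)) ds ) is convex on ℝ^n. -/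
open MeasureTheory Set

/-- Convexity rearrangement: for s ≤ a ≤ b, Φ a + Φ (s + (b - a)) ≤ Φ b + Φ s. -/
lemma key_rearr (Φ : ℝ → ℝ) (hΦ : ConvexOn ℝ Set.univ Φ) {s a b : ℝ} (hsa : s ≤ a) (hab : a ≤ b) :
    Φ a + Φ (s + (b - a)) ≤ Φ b + Φ s := by
  rcases eq_or_lt_of_le (hsa.trans hab) with h | h
  · have h1 : s = a := le_antisymm hsa (h ▸ hab)
    have h2 : s = b := h
    subst h1; rw [← h2]; simp
  · set t : ℝ := (b - a) / (b - s) with ht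
    have hbs : (0:ℝ) < b - s := by linarith
    have ht' : t * (b - s) = b - a := div_mul_cancel₀ _ hbs.ne'
    have ht0 : 0 ≤ t := div_nonneg (by linarith) hbs.le
    have ht1 : t ≤ 1 := by rw [ht, div_le_one hbs]; linarith
    have h1 : a = t * s + (1 - t) * b := by linear_combination ht'
    have h2 : s + (b - a) = (1 - t) * s + t * b := by linear_combination -ht'
    have c1 := hΦ.2 (mem_univ s) (mem_univ b) ht0 (show (0:ℝ) ≤ 1 - t by linarith)
      (show t + (1 - t) = 1 by ring)
    have c2 := hΦ.2 (mem_univ s) (mem_univ b) (show (0:ℝ) ≤ 1 - t by linarith) ht0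
      (show (1 - t) + t = 1 by ring)
    simp only [smul_eq_mul] at c1 c2
    calc Φ a + Φ (s + (b - a)) = Φ (t * s + (1 - t) * b) + Φ ((1 - t) * s + t * b) := by
          rw [← h1, ← h2]
      _ ≤ (t * Φ s + (1 - t) * Φ b) + ((1 - t) * Φ s + t * Φ b) := add_le_add c1 c2
      _ = Φ b + Φ s := by ring


/-- For convex `Φ` with `exp(−Φ)` integrable on every `(−∞, z)`,
`c ∈ ℝ^n` and `τ ∈ ℝ`, the map
`x ↦ −log(∫_{(−∞, τ − ⟨c,x⟩)} exp(−Φ(s)) ds)` is convex on ℝ^n. -/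
theorem stmt_9 (n : ℕ) (Φ : ℝ → ℝ) (hΦ : ConvexOn ℝ Set.univ Φ)
    (hint : ∀ z : ℝ, IntegrableOn (fun s => Real.exp (-Φ s)) (Set.Iio z))
    (c : Fin n → ℝ) (τ : ℝ) :
    ConvexOn ℝ Set.univ (fun x : Fin n → ℝ =>
      -Real.log (∫ s in Set.Iio (τ - ∑ k, c k * x k), Real.exp (-Φ s))) := by
  set g : ℝ → ℝ := fun s => Real.exp (-Φ s) with hg
  have hΦc : Continuous Φ := continuousOn_univ.mp (hΦ.continuousOn isOpen_univ)
  have hgc : Continuous g := (hΦc.neg).rexp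
  have hgpos : ∀ s, 0 < g s := fun s => Real.exp_pos _
  set F : ℝ → ℝ := fun z => ∫ s in Iio z, g s with hF
  -- positivity of F
  have hFpos : ∀ z, 0 < F z := by
    intro z
    have h1 : (0:ℝ) < ∫ s in (z-2)..(z-1), g s :=
      intervalIntegral.intervalIntegral_pos_of_pos (hgc.intervalIntegrable _ _)
        (fun s => hgpos s) (by linarith)
    have h2 : (∫ s in (z-2)..(z-1), g s) = ∫ s in Ioc (z-2) (z-1), g s :=
      intervalIntegral.integral_of_le (by linarith)
    have h3 : (∫ s in Ioc (z-2) (z-1), g s) ≤ F z := by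
      apply setIntegral_mono_set (hint z) (Filter.Eventually.of_forall fun s => (hgpos s).le)
      refine HasSubset.Subset.eventuallyLE ?_
      intro s hs; have := hs.2; simp only [mem_Iio]; linarith
    linarith
  -- F as interval integral
  have hFeq : ∀ z, F z = F 0 + ∫ s in (0:ℝ)..z, g s := by
    intro z
    have h1 : (∫ s in Iic z, g s) - ∫ s in Iic (0:ℝ), g s = ∫ s in (0:ℝ)..z, g s :=
      intervalIntegral.integral_Iic_sub_Iic ((hint 0).congr_set_ae Iio_ae_eq_Iic.symm)
        ((hint z).congr_set_ae Iio_ae_eq_Iic.symm)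
    have h2 : F z = ∫ s in Iic z, g s := (integral_Iic_eq_integral_Iio).symm
    have h3 : F 0 = ∫ s in Iic (0:ℝ), g s := (integral_Iic_eq_integral_Iio).symm
    rw [h2, h3]; linarith
  -- derivative of F
  have hFderiv : ∀ z, HasDerivAt F (g z) z := by
    intro z
    have h : HasDerivAt (fun u => ∫ s in (0:ℝ)..u, g s) (g z) z :=
      intervalIntegral.integral_hasDerivAt_right (hgc.intervalIntegrable 0 z)
        hgc.stronglyMeasurable.stronglyMeasurableAtFilter hgc.continuousAt
    refine HasDerivAt.congr_of_eventuallyEq (h.const_add (F 0)) ?_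
    filter_upwards with u using (hFeq u)
  -- translation identity
  have htrans : ∀ a b : ℝ, F b = ∫ s in Iio a, g (s + (b - a)) := by
    intro a b
    have h := (measurePreserving_add_right volume (b - a)).setIntegral_preimage_emb
      (measurableEmbedding_addRight (b - a)) g (Iio b)
    have hpre : (fun x : ℝ => x + (b - a)) ⁻¹' Iio b = Iio a := by
      ext x; simp only [mem_preimage, mem_Iio]; constructor <;> intro hx <;> linarith
    rw [hpre] at h
    exact h.symm
  -- antitone derivative of log F
  have hanti : Antitone (fun z => g z / F z) := by
    intro a b hab
    have hFa := hFpos a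
    have hFb := hFpos b
    rw [div_le_div_iff₀ hFb hFa]
    rw [htrans a b]
    simp only [hF]
    rw [← integral_const_mul, ← integral_const_mul]
    have hib : IntegrableOn (fun s => g (s + (b - a))) (Iio a) := by
      have h := ((measurePreserving_add_right volume (b - a)).restrict_preimage_emb
        (measurableEmbedding_addRight (b - a)) (Iio b)).integrable_comp_emb
        (measurableEmbedding_addRight (b - a)) (g := g)
      have hpre : (fun x : ℝ => x + (b - a)) ⁻¹' Iio b = Iio a := by
        ext x; simp only [mem_preimage, mem_Iio]; constructor <;> intro hx <;> linarith
      rw [hpre] at h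
      exact h.mpr (hint b)
    apply setIntegral_mono_on ((hint a).const_mul _) (hib.const_mul _) measurableSet_Iio
    intro s hs
    simp only [hg]
    rw [← Real.exp_add, ← Real.exp_add, Real.exp_le_exp]
    have := key_rearr Φ hΦ (le_of_lt hs) hab
    linarith
  -- log F is concave
  have hGdiff : Differentiable ℝ (fun z => Real.log (F z)) :=
    fun z => ((hFderiv z).log (hFpos z).ne').differentiableAt
  have hGderiv : deriv (fun z => Real.log (F z)) = fun z => g z / F z :=
    funext fun z => ((hFderiv z).log (hFpos z).ne').deriv
  have hGconc : ConcaveOn ℝ univ (fun z => Real.log (F z)) :=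
    Antitone.concaveOn_univ_of_deriv hGdiff (hGderiv ▸ hanti)
  -- affine map
  set L : (Fin n → ℝ) →ₗ[ℝ] ℝ := -(∑ k, c k • LinearMap.proj k) with hL
  set A : (Fin n → ℝ) →ᵃ[ℝ] ℝ := L.toAffineMap + AffineMap.const ℝ (Fin n → ℝ) τ with hA
  have hAx : ∀ x, A x = τ - ∑ k, c k * x k := by
    intro x
    simp [hA, hL, LinearMap.sum_apply, LinearMap.smul_apply, LinearMap.proj_apply]
    ring
  have hcomp := (hGconc.comp_affineMap A).neg
  have hpre : A ⁻¹' univ = univ := by simp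
  rw [hpre] at hcomp
  have heq : (fun x : Fin n → ℝ =>
      -Real.log (∫ s in Set.Iio (τ - ∑ k, c k * x k), Real.exp (-Φ s)))
      = -((fun z => Real.log (F z)) ∘ A) := by
    funext x
    simp only [Pi.neg_apply, Function.comp_apply, hAx x, hF, hg]
  rw [heq]
  exact hcomp
end

section
/- Let n, N, l be natural numbers. For each i ∈ {1,…,l} let r_i > 0, c_i ∈ ℝ^n, τ_i ∈ ℝ, and let y : {0,…,N} × {1,…,l} → {0,1} be given binary values. Let A ∈ ℝ^{n×n}, b : {0,…,N−1} → ℝ^n, x̄ ∈ ℝ^n, and let Ψ, G ∈ ℝ^{n×n} be positive semidefinite. Then the function J on (ℝ^n)^{N+1} defined on a trajectory X = (x_0,…,x_N) by J(X) = ‖x_0 − x̄‖²_Ψ + Σ_{j=0}^{N−1} ‖x_{j+1} − A x_j − b_j‖²_G − Σ_{j=0}^{N} Σ_{i=1}^{l} [ (1 − y(j,i)) · log( ∫_{(−∞, τ_i − ⟨c_i, x_j⟩)} exp(−u²/(2 r_i)) du ) + y(j,i) · log( ∫_{(τ_i − ⟨c_i, x_j⟩, ∞)} exp(−u²/(2 r_i))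 du ) ] is convex on all of (ℝ^n)^{N+1}. -/
/-!
The cost is a sum of terms that are separately convex. The arrival and process terms are
positive semidefinite quadratic forms composed with affine maps of the trajectory. Each
measurement term is an affine function of the trajectory, `t = τᵢ - ⟪cᵢ, xⱼ⟫`, fed into
`-(1 - y) log F(t) - y log F(-t)`, where `F(t) = ∫_{-∞}^t exp(-u²/(2r)) du` and `0 ≤ y ≤ 1`.
So it suffices that `log F` is concave: `(log F)'' = (φ' F - φ²) / F²` with `φ = F'`, and
`φ' F ≤ φ²` is Mills' inequality `-(t/r) F(t) ≤ φ(t)`.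
-/

open MeasureTheory Set Filter Real Topology Matrix

section GaussianKernel

variable {r : ℝ}

lemma hasDerivAt_exp_neg_sq_div (r t : ℝ) :
    HasDerivAt (fun u => exp (-u ^ 2 / (2 * r))) (-(t / r) * exp (-t ^ 2 / (2 * r))) t := by
  have h : HasDerivAt (fun u => -u ^ 2 / (2 * r)) (-(2 * t) / (2 * r)) t := by
    simpa using ((hasDerivAt_pow 2 t).neg).div_const (2 * r)
  convert h.exp using 1
  ring

lemma integrable_exp_neg_sq_div (hr : 0 < r) : Integrable fun u => exp (-u ^ 2 / (2 * r)) := by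
  convert integrable_exp_neg_mul_sq (b := 1 / (2 * r)) (by positivity) using 2
  ring_nf

lemma integrable_mul_exp_neg_sq_div (hr : 0 < r) :
    Integrable fun u => u * exp (-u ^ 2 / (2 * r)) := by
  convert integrable_mul_exp_neg_mul_sq (b := 1 / (2 * r)) (by positivity) using 2
  ring_nf

lemma tendsto_exp_neg_sq_div_atBot (hr : 0 < r) :
    Tendsto (fun u => exp (-u ^ 2 / (2 * r))) atBot (𝓝 0) := by
  have hsq : Tendsto (fun u : ℝ => u ^ 2) atBot atTop := by
    simpa [Function.comp_def] using
      (tendsto_pow_atTop (α := ℝ) two_ne_zero).comp tendsto_neg_atBot_atTop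
  exact tendsto_exp_atBot.comp <|
    (tendsto_neg_atTop_atBot.comp hsq).atBot_div_const (by positivity : (0 : ℝ) < 2 * r)

lemma integral_Iio_mul_exp_neg_sq_div (hr : 0 < r) (t : ℝ) :
    ∫ u in Iio t, u * exp (-u ^ 2 / (2 * r)) = -r * exp (-t ^ 2 / (2 * r)) := by
  have hderiv (u : ℝ) : HasDerivAt (fun s => -r * exp (-s ^ 2 / (2 * r)))
      (u * exp (-u ^ 2 / (2 * r))) u := by
    refine ((hasDerivAt_exp_neg_sq_div r u).const_mul (-r)).congr_deriv ?_
    field_simp [hr.ne']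
  rw [← integral_Iic_eq_integral_Iio,
    integral_Iic_of_hasDerivAt_of_tendsto' (fun u _ => hderiv u)
      (integrable_mul_exp_neg_sq_div hr).integrableOn
      (by simpa using (tendsto_exp_neg_sq_div_atBot hr).const_mul (-r)), sub_zero]

lemma integral_Iio_exp_neg_sq_div_pos (hr : 0 < r) (t : ℝ) :
    0 < ∫ u in Iio t, exp (-u ^ 2 / (2 * r)) := by
  rw [setIntegral_pos_iff_support_of_nonneg_ae (.of_forall fun u => (exp_pos _).le)
    (integrable_exp_neg_sq_div hr).integrableOn]
  simp [Function.support, (exp_pos _).ne']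

lemma hasDerivAt_integral_Iio_s14 {f : ℝ → ℝ} (hf : Continuous f) (hfi : Integrable f) (t : ℝ) :
    HasDerivAt (fun s => ∫ u in Iio s, f u) (f t) t := by
  have heq : (fun s => ∫ u in Iio s, f u) = fun s => (∫ u in Iic 0, f u) + ∫ u in 0..s, f u := by
    funext s
    rw [← integral_Iic_eq_integral_Iio,
      ← intervalIntegral.integral_Iic_sub_Iic hfi.integrableOn hfi.integrableOn]
    ring
  rw [heq]
  exact (intervalIntegral.integral_hasDerivAt_right hfi.intervalIntegrable
    (hf.stronglyMeasurableAtFilter _ _) hf.continuousAt).const_add _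

/-- Mills' inequality. For `t < 0` it follows from `1 ≤ u / t` on `(-∞, t)` and
`∫_{-∞}^t u φ(u) du = -r φ(t)`. -/
lemma neg_div_mul_integral_Iio_exp_neg_sq_div_le (hr : 0 < r) (t : ℝ) :
    -(t / r) * ∫ u in Iio t, exp (-u ^ 2 / (2 * r)) ≤ exp (-t ^ 2 / (2 * r)) := by
  have hF := integral_Iio_exp_neg_sq_div_pos hr t
  rcases le_or_gt 0 t with ht | ht
  · have hcoef : -(t / r) ≤ 0 := neg_nonpos.mpr (div_nonneg ht hr.le)
    exact (mul_nonpos_of_nonpos_of_nonneg hcoef hF.le).trans (exp_pos _).le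
  · have hle : ∫ u in Iio t, exp (-u ^ 2 / (2 * r))
        ≤ ∫ u in Iio t, u * exp (-u ^ 2 / (2 * r)) / t := by
      refine setIntegral_mono_on (integrable_exp_neg_sq_div hr).integrableOn
        ((integrable_mul_exp_neg_sq_div hr).integrableOn.div_const t) measurableSet_Iio
        fun u hu => ?_
      rw [le_div_iff_of_neg ht, mul_comm]
      exact mul_le_mul_of_nonneg_left (le_of_lt hu) (exp_pos _).le
    rw [integral_div, integral_Iio_mul_exp_neg_sq_div hr] at hle
    have hcoef : 0 ≤ -(t / r) := neg_nonneg.mpr (div_neg_of_neg_of_pos ht hr).le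
    calc -(t / r) * ∫ u in Iio t, exp (-u ^ 2 / (2 * r))
        ≤ -(t / r) * (-r * exp (-t ^ 2 / (2 * r)) / t) := mul_le_mul_of_nonneg_left hle hcoef
      _ = exp (-t ^ 2 / (2 * r)) := by field_simp [hr.ne', ht.ne]

lemma concaveOn_log_integral_Iio_exp_neg_sq_div (hr : 0 < r) :
    ConcaveOn ℝ univ fun t => log (∫ u in Iio t, exp (-u ^ 2 / (2 * r))) := by
  set φ : ℝ → ℝ := fun u => exp (-u ^ 2 / (2 * r))
  set F : ℝ → ℝ := fun t => ∫ u in Iio t, φ u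
  have hF (t : ℝ) : HasDerivAt F (φ t) t :=
    hasDerivAt_integral_Iio_s14 (by fun_prop) (integrable_exp_neg_sq_div hr) t
  have hFpos (t : ℝ) : 0 < F t := integral_Iio_exp_neg_sq_div_pos hr t
  have hlogF (t : ℝ) : HasDerivAt (fun s => log (F s)) (φ t / F t) t :=
    (hF t).log (hFpos t).ne'
  have hratio (t : ℝ) : HasDerivAt (fun s => φ s / F s)
      ((-(t / r) * φ t * F t - φ t * φ t) / F t ^ 2) t :=
    (hasDerivAt_exp_neg_sq_div r t).div (hF t) (hFpos t).ne'
  refine concaveOn_of_hasDerivWithinAt2_nonpos convex_univ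
    (fun t _ => (hlogF t).continuousAt.continuousWithinAt)
    (fun t _ => (hlogF t).hasDerivWithinAt) (fun t _ => (hratio t).hasDerivWithinAt)
    fun t _ => div_nonpos_of_nonpos_of_nonneg ?_ (sq_nonneg _)
  have hmills := neg_div_mul_integral_Iio_exp_neg_sq_div_le hr t
  have hφpos : 0 < φ t := exp_pos _
  nlinarith

lemma concaveOn_log_integral_Ioi_exp_neg_sq_div (hr : 0 < r) :
    ConcaveOn ℝ univ fun t => log (∫ u in Ioi t, exp (-u ^ 2 / (2 * r))) := by
  have hreflect (t : ℝ) : ∫ u in Ioi t, exp (-u ^ 2 / (2 * r))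
      = ∫ u in Iio (-t), exp (-u ^ 2 / (2 * r)) := by
    rw [← integral_Iic_eq_integral_Iio, ← integral_comp_neg_Ioi]
    simp only [neg_sq]
  simp_rw [hreflect]
  exact (concaveOn_log_integral_Iio_exp_neg_sq_div hr).comp_linearMap (-LinearMap.id)

end GaussianKernel

lemma concaveOn_threshold_logLikelihood {r y : ℝ} (hr : 0 < r) (hy₀ : 0 ≤ y) (hy₁ : y ≤ 1) :
    ConcaveOn ℝ univ fun t => (1 - y) * log (∫ u in Iio t, exp (-u ^ 2 / (2 * r))) +
      y * log (∫ u in Ioi t, exp (-u ^ 2 / (2 * r))) :=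
  ((concaveOn_log_integral_Iio_exp_neg_sq_div hr).smul (sub_nonneg.mpr hy₁)).add
    ((concaveOn_log_integral_Ioi_exp_neg_sq_div hr).smul hy₀)

section FinsetSum

variable {𝕜 E β ι : Type*} [Semiring 𝕜] [PartialOrder 𝕜] [AddCommMonoid E] [SMul 𝕜 E]
  [AddCommMonoid β] [PartialOrder β] [IsOrderedAddMonoid β] [Module 𝕜 β] {s : Set E}

theorem convexOn_finset_sum {f : ι → E → β} (t : Finset ι) (hs : Convex 𝕜 s)
    (hf : ∀ i ∈ t, ConvexOn 𝕜 s (f i)) : ConvexOn 𝕜 s fun x => ∑ i ∈ t, f i x := by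
  rw [← Finset.sum_fn]
  exact Finset.sum_induction f (ConvexOn 𝕜 s) (fun _ _ => ConvexOn.add)
    (convexOn_const 0 hs) hf

theorem concaveOn_finset_sum {f : ι → E → β} (t : Finset ι) (hs : Convex 𝕜 s)
    (hf : ∀ i ∈ t, ConcaveOn 𝕜 s (f i)) : ConcaveOn 𝕜 s fun x => ∑ i ∈ t, f i x := by
  rw [← Finset.sum_fn]
  exact Finset.sum_induction f (ConcaveOn 𝕜 s) (fun _ _ => ConcaveOn.add)
    (concaveOn_const 0 hs) hf

end FinsetSum

-- `a f(x) + b f(y) - f(a x + b y) = a b f(x - y)` when `a + b = 1`, for any quadratic form `f`.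
theorem Matrix.PosSemidef.convexOn_dotProduct_mulVec {ι : Type*} [Fintype ι]
    {M : Matrix ι ι ℝ} (hM : M.PosSemidef) : ConvexOn ℝ univ fun v : ι → ℝ => v ⬝ᵥ M *ᵥ v := by
  refine ⟨convex_univ, fun x _ y _ a b ha hb hab => ?_⟩
  obtain rfl : b = 1 - a := by linarith
  have hxy : 0 ≤ (x - y) ⬝ᵥ M *ᵥ (x - y) := by simpa using hM.dotProduct_mulVec_nonneg (x - y)
  have hgap : a • (x ⬝ᵥ M *ᵥ x) + (1 - a) • (y ⬝ᵥ M *ᵥ y)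
      - (a • x + (1 - a) • y) ⬝ᵥ M *ᵥ (a • x + (1 - a) • y)
      = a * (1 - a) * ((x - y) ⬝ᵥ M *ᵥ (x - y)) := by
    simp only [mulVec_add, mulVec_sub, mulVec_smul, add_dotProduct,
      dotProduct_add, sub_dotProduct, dotProduct_sub, smul_dotProduct, dotProduct_smul, smul_eq_mul]
    ring
  nlinarith [mul_nonneg (mul_nonneg ha hb) hxy]

section AffineComposition

variable {E F β : Type*} [AddCommGroup E] [Module ℝ E] [AddCommGroup F] [Module ℝ F]
  [AddCommMonoid β] [PartialOrder β] [SMul ℝ β]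

theorem ConvexOn.comp_linearMap_sub_const {f : F → β} (hf : ConvexOn ℝ univ f) (L : E →ₗ[ℝ] F)
    (v : F) : ConvexOn ℝ univ fun x => f (L x - v) :=
  hf.comp_affineMap (L.toAffineMap - AffineMap.const ℝ E v)

theorem ConcaveOn.comp_const_sub_linearMap {f : F → β} (hf : ConcaveOn ℝ univ f)
    (v : F) (L : E →ₗ[ℝ] F) : ConcaveOn ℝ univ fun x => f (v - L x) :=
  hf.comp_affineMap (AffineMap.const ℝ E v - L.toAffineMap)

end AffineComposition

/-- Proposition 1, Gaussian case: the moving-horizon MAP cost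
with quadratic arrival cost, Gaussian process-disturbance terms, and threshold
measurements with Gaussian noises `N(0, r_i)` is convex on the whole
trajectory space. -/
theorem stmt_14 (n N l : ℕ)
    (r : Fin l → ℝ) (hr : ∀ i, 0 < r i)
    (c : Fin l → Fin n → ℝ) (τ : Fin l → ℝ)
    (y : Fin (N + 1) → Fin l → ℝ)
    (hy : ∀ j i, y j i = 0 ∨ y j i = 1)
    (A : Matrix (Fin n) (Fin n) ℝ) (b : Fin N → Fin n → ℝ)
    (xbar : Fin n → ℝ) (Ψ G : Matrix (Fin n) (Fin n) ℝ)
    (hΨ : Ψ.PosSemidef) (hG : G.PosSemidef) :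
    ConvexOn ℝ Set.univ (fun X : Fin (N + 1) → Fin n → ℝ =>
      dotProduct (X 0 - xbar) (Ψ.mulVec (X 0 - xbar)) +
      (∑ j : Fin N, dotProduct
        (X j.succ - A.mulVec (X j.castSucc) - b j)
        (G.mulVec (X j.succ - A.mulVec (X j.castSucc) - b j))) -
      ∑ j : Fin (N + 1), ∑ i : Fin l,
        ((1 - y j i) *
            Real.log (∫ u in Set.Iio (τ i - ∑ k, c i k * X j k),
              Real.exp (-u ^ 2 / (2 * r i))) +
          y j i *
            Real.log (∫ u in Set.Ioi (τ i - ∑ k, c i k * X j k),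
              Real.exp (-u ^ 2 / (2 * r i))))) := by
  let proj (j : Fin (N + 1)) : (Fin (N + 1) → Fin n → ℝ) →ₗ[ℝ] Fin n → ℝ := LinearMap.proj j
  have harrival : ConvexOn ℝ univ fun X : Fin (N + 1) → Fin n → ℝ =>
      (X 0 - xbar) ⬝ᵥ Ψ *ᵥ (X 0 - xbar) :=
    hΨ.convexOn_dotProduct_mulVec.comp_linearMap_sub_const (proj 0) xbar
  have hdynamics : ConvexOn ℝ univ fun X : Fin (N + 1) → Fin n → ℝ =>
      ∑ j : Fin N, (X j.succ - A *ᵥ X j.castSucc - b j) ⬝ᵥ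
        G *ᵥ (X j.succ - A *ᵥ X j.castSucc - b j) :=
    convexOn_finset_sum _ convex_univ fun j _ =>
      hG.convexOn_dotProduct_mulVec.comp_linearMap_sub_const
        (proj j.succ - A.mulVecLin ∘ₗ proj j.castSucc) (b j)
  have hy01 (j : Fin (N + 1)) (i : Fin l) : 0 ≤ y j i ∧ y j i ≤ 1 := by
    rcases hy j i with h | h <;> simp [h]
  have hmeasure : ConcaveOn ℝ univ fun X : Fin (N + 1) → Fin n → ℝ =>
      ∑ j : Fin (N + 1), ∑ i : Fin l,
        ((1 - y j i) * log (∫ u in Iio (τ i - ∑ k, c i k * X j k), exp (-u ^ 2 / (2 * r i))) +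
          y j i * log (∫ u in Ioi (τ i - ∑ k, c i k * X j k), exp (-u ^ 2 / (2 * r i)))) :=
    concaveOn_finset_sum _ convex_univ fun j _ => concaveOn_finset_sum _ convex_univ fun i _ =>
      (concaveOn_threshold_logLikelihood (hr i) (hy01 j i).1 (hy01 j i).2).comp_const_sub_linearMap
        (τ i) (dotProductBilin ℝ ℝ (c i) ∘ₗ proj j)
  exact (harrival.add hdynamics).sub hmeasure
end
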